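/- Let (Σ,σ) be a primitive Markov subshift on a countable alphabet. Suppose u : Σ → ℝ is a bounded continuous sub-action for a bounded above, coercive, continuous potential A : Σ → ℝ. If μ ∈ M_σ is an A-maximizing probability, then μ is supported in a Markov subshift on a finite alphabet, i.e. there exists I ∈ ℤ₊ with supp(μ) ⊆ Σ_I. -/

import Mathlib

open MeasureTheory Filter Topology Set

/-- Membership in the Markov shift: admissible transitions at every coordinate. -/
def InShift (M : ℕ → ℕ → Bool) (x : ℕ → ℕ) : Prop := ∀ j, M (x j) (x (j+1)) = true

/-- The one-sided countable Markov shift `Σ` associated to the transition matrix `M`,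
as a subtype of `ℕ → ℕ` (with the product topology, which is the topology induced by
the metric `d(x,y) = λ^{min{j : x_j ≠ y_j}}`). -/
abbrev ShiftSpace (M : ℕ → ℕ → Bool) := {x : ℕ → ℕ // InShift M x}

/-- The left shift map `σ`. -/
def shiftMap (M : ℕ → ℕ → Bool) (x : ShiftSpace M) : ShiftSpace M :=
  ⟨fun j => x.1 (j+1), fun j => x.2 (j+1)⟩

/-- `Agree M k x y` means the points `x, y` coincide on the first `k` coordinates;
for `k ≥ 1` this is exactly `d(x,y) ≤ λ^k` for the metric of the paper. -/
def Agree (M : ℕ → ℕ → Bool) (k : ℕ) (x y : ShiftSpace M) : Prop :=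
  ∀ j < k, x.1 j = y.1 j

/-- The sets `B_n` of symbols admitting admissible words of length `n+1` starting at them. -/
def BSet (M : ℕ → ℕ → Bool) : ℕ → Set ℕ
  | 0 => {i | ∃ j, M i j = true}
  | n+1 => {i | ∃ j ∈ BSet M n, M i j = true}

/-- `⋂_{n ≥ 0} B_n`. -/
def BInf (M : ℕ → ℕ → Bool) : Set ℕ := ⋂ n, BSet M n

/-- `M` is primitive with connecting set `F` and connection length `K₀`: any two symbols
of `⋂ B_n` can be joined by an admissible word of length `K₀` with all letters in `F`. -/
def Primitive (M : ℕ → ℕ → Bool) (F : Set ℕ) (K₀ : ℕ) : Prop :=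
  ∀ i ∈ BInf M, ∀ j ∈ BInf M, ∃ p : ℕ → ℕ,
    p 0 = i ∧ p (K₀ + 1) = j ∧ (∀ t, 1 ≤ t → t ≤ K₀ → p t ∈ F) ∧
    (∀ t ≤ K₀, M (p t) (p (t+1)) = true)

/-- `A` is locally Hölder continuous with constant `H`:
`Var_k(A) ≤ H ⬝ λ^k` for every `k ≥ 1`. -/
def LocHolder (M : ℕ → ℕ → Bool) (lam H : ℝ) (A : ShiftSpace M → ℝ) : Prop :=
  ∀ k : ℕ, 1 ≤ k → ∀ x y : ShiftSpace M, Agree M k x y → A x - A y ≤ H * lam ^ k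

/-- `A` is coercive: `sup A|_{[i]} → -∞` as `i → ∞`. -/
def Coercive (M : ℕ → ℕ → Bool) (A : ShiftSpace M → ℝ) : Prop :=
  ∀ C : ℝ, ∃ N : ℕ, ∀ i : ℕ, N ≤ i → ∀ x : ShiftSpace M, x.1 0 = i → A x ≤ C

/-- The union of cylinders `⋃_{i ∈ F} [i]`. -/
def FCyl (M : ℕ → ℕ → Bool) (F : Set ℕ) : Set (ShiftSpace M) := {x | x.1 0 ∈ F}

/-- `μ` is a `σ`-invariant Borel probability measure. -/
def InvProb (M : ℕ → ℕ → Bool) (μ : Measure (ShiftSpace M)) : Prop :=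
  IsProbabilityMeasure μ ∧ μ.map (shiftMap M) = μ

/-- The ergodic maximizing value `β_A = sup {∫ A dμ : μ ∈ M_σ}`. -/
noncomputable def betaA (M : ℕ → ℕ → Bool) (A : ShiftSpace M → ℝ) : ℝ :=
  sSup {r | ∃ μ : Measure (ShiftSpace M), InvProb M μ ∧ Integrable A μ ∧ ∫ x, A x ∂μ = r}

/-- The compact subshift `Σ_I` on the finite alphabet `{0, …, I}`. -/
def SpaceI (M : ℕ → ℕ → Bool) (I : ℕ) : Set (ShiftSpace M) := {x | ∀ j, x.1 j ≤ I}

/-- `β_A(I) = max {∫ A dμ : μ ∈ M_σ, supp μ ⊆ Σ_I}`. -/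
noncomputable def betaAI (M : ℕ → ℕ → Bool) (A : ShiftSpace M → ℝ) (I : ℕ) : ℝ :=
  sSup {r | ∃ μ : Measure (ShiftSpace M), InvProb M μ ∧ μ (SpaceI M I) = 1 ∧
    Integrable A μ ∧ ∫ x, A x ∂μ = r}

/-- Birkhoff sum `S_k A`. -/
noncomputable def birkhoff (M : ℕ → ℕ → Bool) (A : ShiftSpace M → ℝ) (k : ℕ)
    (x : ShiftSpace M) : ℝ :=
  ∑ j ∈ Finset.range k, A ((shiftMap M)^[j] x)

/-- The `k`-th variation `Var_k(A)`. -/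
noncomputable def VarK (M : ℕ → ℕ → Bool) (A : ShiftSpace M → ℝ) (k : ℕ) : ℝ :=
  sSup {r | ∃ x y : ShiftSpace M, Agree M k x y ∧ A x - A y = r}

/-- `Var(A) = ∑_{k ≥ 1} Var_k(A)`. -/
noncomputable def VarSum (M : ℕ → ℕ → Bool) (A : ShiftSpace M → ℝ) : ℝ :=
  ∑' k : ℕ, VarK M A (k + 1)

/-- `sup A`. -/
noncomputable def supA (M : ℕ → ℕ → Bool) (A : ShiftSpace M → ℝ) : ℝ :=
  sSup (Set.range A)

/-- `inf A|_{⋃_{i ∈ F} [i]}`. -/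
noncomputable def infF (M : ℕ → ℕ → Bool) (F : Set ℕ) (A : ShiftSpace M → ℝ) : ℝ :=
  sInf (A '' FCyl M F)

/-- The defining set for `u_A(x)`: all values `S_k(A - β_A)(y)` with `σ^k(y) = x`. -/
noncomputable def uASet (M : ℕ → ℕ → Bool) (A : ShiftSpace M → ℝ) (x : ShiftSpace M) :
    Set ℝ :=
  {r | ∃ (k : ℕ) (y : ShiftSpace M), (shiftMap M)^[k] y = x ∧
    birkhoff M A k y - k * betaA M A = r}

/-- The candidate minimal sub-action
`u_A(x) = sup {S_k(A - β_A)(y) : k ≥ 0, σ^k(y) = x}`. -/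
noncomputable def uA (M : ℕ → ℕ → Bool) (A : ShiftSpace M → ℝ) (x : ShiftSpace M) : ℝ :=
  sSup (uASet M A x)

/-- The non-wandering set `Ω(A, I)` with respect to `A|_{Σ_I}`. -/
def NonWandering (M : ℕ → ℕ → Bool) (A : ShiftSpace M → ℝ) (I : ℕ) :
    Set (ShiftSpace M) :=
  {x | x ∈ SpaceI M I ∧ ∀ ε : ℝ, 0 < ε → ∀ m : ℕ,
    ∃ y ∈ SpaceI M I, ∃ n : ℕ, 1 ≤ n ∧ Agree M m x y ∧
      Agree M m x ((shiftMap M)^[n] y) ∧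
      |birkhoff M A n y - n * betaAI M A I| < ε}

/-!
Integrating the sub-action inequality `A + u - u ∘ σ ≤ β_A` against a maximizing measure `μ`
gives an equality, because `u ∘ σ` and `u` have the same `μ`-integral; so `A + u - u ∘ σ = β_A`
holds `μ`-a.e. As `u` is bounded, `A` is then bounded below `μ`-a.e., and coercivity bounds the
first symbol `μ`-a.e. By `σ`-invariance of `μ` the same bound holds for every symbol.
-/

section MeasurePreserving

variable {α : Type*} [MeasurableSpace α] {μ : Measure α}

theorem ae_eq_const_of_le_of_integral_eq [IsProbabilityMeasure μ] {g : α → ℝ} {c : ℝ}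
    (hg : Integrable g μ) (hle : ∀ x, g x ≤ c) (hint : ∫ x, g x ∂μ = c) :
    ∀ᵐ x ∂μ, g x = c := by
  have hgap : ∫ x, (c - g x) ∂μ = 0 := by
    rw [integral_sub (integrable_const c) hg, integral_const, hint]
    simp
  have hgap_ae := (integral_eq_zero_iff_of_nonneg (fun x => sub_nonneg.2 (hle x))
    ((integrable_const c).sub hg)).1 hgap
  filter_upwards [hgap_ae] with x hx
  exact (sub_eq_zero.1 hx).symm

theorem MeasureTheory.MeasurePreserving.integral_comp_of_aestronglyMeasurable
    {β E : Type*} [MeasurableSpace β] [NormedAddCommGroup E] [NormedSpace ℝ E] {ν : Measure β}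
    {T : α → β} (hT : MeasurePreserving T μ ν) {u : β → E} (hu : AEStronglyMeasurable u ν) :
    ∫ x, u (T x) ∂μ = ∫ y, u y ∂ν := by
  rw [← hT.map_eq] at hu ⊢
  exact (integral_map hT.measurable.aemeasurable hu).symm

theorem ae_add_sub_comp_eq_of_le_of_integral_eq [IsProbabilityMeasure μ] {T : α → α}
    (hT : MeasurePreserving T μ μ) {A u : α → ℝ} {β : ℝ} (hA : Integrable A μ)
    (hu : Integrable u μ) (hsub : ∀ x, A x + u x - u (T x) ≤ β) (hmax : ∫ x, A x ∂μ = β) :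
    ∀ᵐ x ∂μ, A x + u x - u (T x) = β := by
  have hAu : Integrable (fun x => A x + u x) μ := hA.add hu
  have huT : Integrable (fun x => u (T x)) μ :=
    (hT.integrable_comp hu.aestronglyMeasurable).2 hu
  refine ae_eq_const_of_le_of_integral_eq (hAu.sub huT) hsub ?_
  rw [integral_sub hAu huT, integral_add hA hu,
    hT.integral_comp_of_aestronglyMeasurable hu.aestronglyMeasurable, hmax, add_sub_cancel_right]

end MeasurePreserving

section ShiftSpace

variable {M : ℕ → ℕ → Bool}

instance ShiftSpace.opensMeasurableSpace :
    OpensMeasurableSpace (ShiftSpace M) :=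
  inferInstanceAs (OpensMeasurableSpace {x : ℕ → ℕ | InShift M x})

theorem measurable_shiftMap : Measurable (shiftMap M) := by
  apply Measurable.subtype_mk
  exact measurable_pi_iff.2 fun j => (measurable_pi_apply (j + 1)).comp measurable_subtype_coe

theorem shiftMap_iterate_apply (n : ℕ) (x : ShiftSpace M) (i : ℕ) :
    ((shiftMap M)^[n] x).1 i = x.1 (i + n) := by
  induction n generalizing x with
  | zero => rfl
  | succ n ih => rw [Function.iterate_succ_apply, ih]; rfl

theorem Coercive.exists_coord_lt_of_le {A : ShiftSpace M → ℝ} (hA : Coercive M A) (c : ℝ) :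
    ∃ N, ∀ x, c ≤ A x → x.1 0 < N := by
  obtain ⟨N, hN⟩ := hA (c - 1)
  refine ⟨N, fun x hx => ?_⟩
  by_contra! hle
  linarith [hN _ hle x rfl]

theorem measurableSet_spaceI {N : ℕ} : MeasurableSet (SpaceI M N) := by
  simp only [SpaceI, ofPred_forall]
  exact MeasurableSet.iInter fun j =>
    measurableSet_le ((measurable_pi_apply j).comp measurable_subtype_coe) measurable_const

theorem measure_spaceI_eq_one {μ : Measure (ShiftSpace M)} [IsProbabilityMeasure μ]
    (hσ : MeasurePreserving (shiftMap M) μ μ) {N : ℕ} (h : ∀ᵐ x ∂μ, x.1 0 ≤ N) :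
    μ (SpaceI M N) = 1 := by
  have hcoord : ∀ j, ∀ᵐ x ∂μ, x.1 j ≤ N := fun j => by
    simpa [shiftMap_iterate_apply] using (hσ.iterate j).quasiMeasurePreserving.ae h
  rw [← measure_univ (μ := μ)]
  exact (ae_iff_measure_eq measurableSet_spaceI.nullMeasurableSet).1 (ae_all_iff.2 hcoord)

end ShiftSpace

theorem maximizing_supported_in_finite_alphabet_general
    (M : ℕ → ℕ → Bool)
    (A : ShiftSpace M → ℝ) (hcoer : Coercive M A)
    (u : ShiftSpace M → ℝ) (hu : Continuous u) (hubdd : ∃ C : ℝ, ∀ x, |u x| ≤ C)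
    (hsub : ∀ x, A x + u x - u (shiftMap M x) ≤ betaA M A)
    (μ : Measure (ShiftSpace M)) (hμ : InvProb M μ)
    (hint : Integrable A μ) (hmax : ∫ x, A x ∂μ = betaA M A) :
    ∃ I : ℕ, μ (SpaceI M I) = 1 := by
  obtain ⟨hprob, hinv⟩ := hμ
  obtain ⟨C, hC⟩ := hubdd
  have hσ : MeasurePreserving (shiftMap M) μ μ := ⟨measurable_shiftMap, hinv⟩
  have hui : Integrable u μ := .of_bound hu.aestronglyMeasurable C (ae_of_all _ hC)
  have hcoh := ae_add_sub_comp_eq_of_le_of_integral_eq hσ hint hui hsub hmax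
  obtain ⟨N, hN⟩ := hcoer.exists_coord_lt_of_le (betaA M A - 2 * C)
  refine ⟨N, measure_spaceI_eq_one hσ ?_⟩
  filter_upwards [hcoh] with x hx
  have hux := abs_le.1 (hC x)
  have huσx := abs_le.1 (hC (shiftMap M x))
  exact (hN x (by linarith)).le

/-- if `u` is a bounded continuous sub-action for a bounded above, coercive,
continuous potential `A`, then any `A`-maximizing probability is supported in some
Markov subshift `Σ_I` on a finite alphabet. -/
theorem maximizing_supported_in_finite_alphabet
    (M : ℕ → ℕ → Bool) (F : Set ℕ) (K₀ : ℕ)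
    (hprim : Primitive M F K₀)
    (A : ShiftSpace M → ℝ) (hA : Continuous A)
    (hbdd : BddAbove (Set.range A)) (hcoer : Coercive M A)
    (u : ShiftSpace M → ℝ) (hu : Continuous u) (hubdd : ∃ C : ℝ, ∀ x, |u x| ≤ C)
    (hsub : ∀ x, A x + u x - u (shiftMap M x) ≤ betaA M A)
    (μ : Measure (ShiftSpace M)) (hμ : InvProb M μ)
    (hint : Integrable A μ) (hmax : ∫ x, A x ∂μ = betaA M A) :
    ∃ I : ℕ, μ (SpaceI M I) = 1 :=
  maximizing_supported_in_finite_alphabet_general M A hcoer u hu hubdd hsub μ hμ hint hmax
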